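/- arXiv:2305.09701 — 2 statements merged into one kernel-verified Lean document; each statement's English description precedes it below -/
import Mathlib

section
/- Let α ≥ 0, δ > 0, x ≥ 0, and let g be a real-valued function on [0,∞) belonging to B_{ρα}(ℝ₊). Let L be a linear functional on the space of real-valued functions on [0,∞) which is positive (L f ≥ 0 whenever f(y) ≥ 0 for all y ≥ 0) and satisfies L(1) = 1. Then |L(g) − g(x)| ≤ √(L(μ_{x,α}²)) · (1 + (1/δ)·√(L(φ_x²))) · ω_{ρα}(g; δ), where μ_{x,α}(y) = 1 + (x + |y − x|)^{2+α} and φ_x(y) = |y − x| for y ≥ 0. -/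
/-- A function `g` belongs to the weighted space `B_{ρα}(ℝ₊)` if
`|g(x)| ≤ N(1 + x^{2+α})` for all `x ≥ 0`, for some constant `N ≥ 0`. -/
def MemBRho (α : ℝ) (g : ℝ → ℝ) : Prop :=
  ∃ N : ℝ, 0 ≤ N ∧ ∀ x : ℝ, 0 ≤ x → |g x| ≤ N * (1 + x ^ (2 + α))

/-- The weighted modulus of smoothness
`ω_{ρα}(g; δ) = sup { |g(x+i) − g(x)| / (1 + (x+i)^{2+α}) : x ≥ 0, 0 < i < δ }`. -/
noncomputable def omegaRho (α : ℝ) (g : ℝ → ℝ) (δ : ℝ) : ℝ :=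
  sSup {r : ℝ | ∃ x : ℝ, 0 ≤ x ∧ ∃ i : ℝ, 0 < i ∧ i < δ ∧
    r = |g (x + i) - g x| / (1 + (x + i) ^ (2 + α))}

/-!
Split `g y - g x` into `n ≈ 1 + |y - x| / δ` increments of length `< δ`; each is bounded by the
weight at the right endpoint times `ω_{ρα}(g; δ)`, and the weight is monotone, which gives the
pointwise bound `|g y - g x| ≤ μ_{x,α}(y) (1 + φ_x(y) / δ) ω_{ρα}(g; δ)`. Positivity of `L`
transfers it to `|L g - g x|`, and the Cauchy–Schwarz inequality for the positive functional `L`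
bounds `L μ_{x,α}` and `L (μ_{x,α} φ_x)`.
-/

open Set

section PositiveFunctional

variable {X : Type*} (L : (X → ℝ) →ₗ[ℝ] ℝ)

theorem LinearMap.abs_map_le_of_abs_le {s : Set X}
    (hL : ∀ f : X → ℝ, (∀ y ∈ s, 0 ≤ f y) → 0 ≤ L f) {f F : X → ℝ}
    (hfF : ∀ y ∈ s, |f y| ≤ F y) : |L f| ≤ L F := by
  have upper := hL (F - f) fun y hy => sub_nonneg.2 (le_of_abs_le (hfF y hy))
  have lower := hL (F + f) fun y hy => by
    show 0 ≤ F y + f y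
    linarith [neg_abs_le (f y), hfF y hy]
  rw [map_sub] at upper
  rw [map_add] at lower
  exact abs_le.2 ⟨by linarith, by linarith⟩

theorem LinearMap.map_mul_le_sqrt_mul_sqrt (hL : ∀ f : X → ℝ, (∀ y, 0 ≤ f y) → 0 ≤ L f)
    (u v : X → ℝ) :
    L (fun y => u y * v y) ≤ √(L fun y => u y ^ 2) * √(L fun y => v y ^ 2) := by
  set A := L fun y => u y ^ 2
  set B := L fun y => v y ^ 2
  set C := L fun y => u y * v y
  have hA : 0 ≤ A := hL _ fun y => sq_nonneg _
  have quadratic_nonneg : ∀ t : ℝ, 0 ≤ B * (t * t) + -(2 * C) * t + A := by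
    intro t
    have hexpand : (fun y => (u y - t * v y) ^ 2) =
        (fun y => u y ^ 2) + (-(2 * t)) • (fun y => u y * v y) + (t * t) • fun y => v y ^ 2 := by
      funext y
      simp only [Pi.add_apply, Pi.smul_apply, smul_eq_mul]
      ring
    have := hL _ fun y => sq_nonneg (u y - t * v y)
    rw [hexpand, map_add, map_add, map_smul, map_smul, smul_eq_mul, smul_eq_mul] at this
    linarith
  have hdisc := discrim_le_zero quadratic_nonneg
  rw [discrim] at hdisc
  rw [← Real.sqrt_mul hA]
  exact Real.le_sqrt_of_sq_le (by nlinarith)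

theorem LinearMap.map_le_sqrt_map_sq (hL : ∀ f : X → ℝ, (∀ y, 0 ≤ f y) → 0 ≤ L f)
    (hL1 : L (fun _ => 1) = 1) (u : X → ℝ) : L u ≤ √(L fun y => u y ^ 2) := by
  simpa [hL1] using L.map_mul_le_sqrt_mul_sqrt hL u fun _ => 1

end PositiveFunctional

section ModulusOfSmoothness

variable {α δ : ℝ} {g : ℝ → ℝ}

theorem omegaRho_nonneg : 0 ≤ omegaRho α g δ :=
  Real.sSup_nonneg fun _ ⟨x, hx, i, hi, _, hr⟩ => hr ▸ div_nonneg (abs_nonneg _) (by positivity)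

theorem abs_add_sub_le_mul_omegaRho (hα : 0 ≤ 2 + α) (hg : MemBRho α g) {a i : ℝ} (ha : 0 ≤ a)
    (hi : 0 < i) (hiδ : i < δ) :
    |g (a + i) - g a| ≤ (1 + (a + i) ^ (2 + α)) * omegaRho α g δ := by
  have bdd : BddAbove {r : ℝ | ∃ x : ℝ, 0 ≤ x ∧ ∃ i : ℝ, 0 < i ∧ i < δ ∧
      r = |g (x + i) - g x| / (1 + (x + i) ^ (2 + α))} := by
    obtain ⟨N, hN0, hN⟩ := hg
    refine ⟨2 * N, ?_⟩
    rintro r ⟨x, hx, i, hi, -, rfl⟩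
    have hmono : x ^ (2 + α) ≤ (x + i) ^ (2 + α) := Real.rpow_le_rpow hx (by linarith) hα
    rw [div_le_iff₀ (by positivity)]
    linarith [abs_sub (g (x + i)) (g x), hN (x + i) (by positivity), hN x hx,
      mul_le_mul_of_nonneg_left hmono hN0]
  rw [← div_le_iff₀' (by positivity)]
  exact le_csSup bdd ⟨a, ha, i, hi, hiδ, rfl⟩

theorem abs_add_natCast_mul_sub_le (hα : 0 ≤ 2 + α) (hg : MemBRho α g) {h : ℝ} (hh : 0 < h)
    (hhδ : h < δ) (n : ℕ) {a : ℝ} (ha : 0 ≤ a) :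
    |g (a + n * h) - g a| ≤ n * (1 + (a + n * h) ^ (2 + α)) * omegaRho α g δ := by
  induction n with
  | zero => simp
  | succ n ih =>
    have hmid : 0 ≤ a + n * h := by positivity
    have hend : a + (n + 1 : ℕ) * h = a + n * h + h := by push_cast; ring
    have hmono : (a + n * h) ^ (2 + α) ≤ (a + n * h + h) ^ (2 + α) :=
      Real.rpow_le_rpow hmid (by linarith) hα
    have hω : 0 ≤ omegaRho α g δ := omegaRho_nonneg
    have hlast := abs_add_sub_le_mul_omegaRho hα hg hmid hh hhδ
    calc |g (a + (n + 1 : ℕ) * h) - g a|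
        ≤ |g (a + n * h + h) - g (a + n * h)| + |g (a + n * h) - g a| := by
          rw [hend]; exact abs_sub_le _ _ _
      _ ≤ (1 + (a + n * h + h) ^ (2 + α)) * omegaRho α g δ +
            n * (1 + (a + n * h + h) ^ (2 + α)) * omegaRho α g δ :=
          add_le_add hlast (ih.trans (by gcongr))
      _ = (n + 1 : ℕ) * (1 + (a + (n + 1 : ℕ) * h) ^ (2 + α)) * omegaRho α g δ := by
          rw [hend]; push_cast; ring

theorem abs_sub_le_mul_omegaRho_of_le (hα : 0 ≤ 2 + α) (hg : MemBRho α g) (hδ : 0 < δ) {a b : ℝ}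
    (ha : 0 ≤ a) (hab : a ≤ b) :
    |g b - g a| ≤ (1 + (b - a) / δ) * (1 + b ^ (2 + α)) * omegaRho α g δ := by
  have hω : 0 ≤ omegaRho α g δ := omegaRho_nonneg
  have hb : 0 ≤ b := ha.trans hab
  rcases hab.eq_or_lt with rfl | hlt
  · simp only [sub_self, abs_zero]
    positivity
  set n : ℕ := ⌊(b - a) / δ⌋₊ + 1
  have hn : (0 : ℝ) < n := by positivity
  have hfloor : (b - a) / δ < n := by simpa [n] using Nat.lt_floor_add_one ((b - a) / δ)
  have hn_le : (n : ℝ) ≤ 1 + (b - a) / δ := by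
    simpa [n, add_comm] using Nat.floor_le (div_nonneg (sub_nonneg.2 hab) hδ.le)
  have hstep : (b - a) / n < δ := by
    rw [div_lt_iff₀ hn]
    rwa [div_lt_iff₀ hδ, mul_comm] at hfloor
  have hsteps := abs_add_natCast_mul_sub_le hα hg (div_pos (sub_pos.2 hlt) hn) hstep n ha
  rw [mul_div_cancel₀ _ hn.ne', add_sub_cancel] at hsteps
  calc |g b - g a| ≤ n * (1 + b ^ (2 + α)) * omegaRho α g δ := hsteps
    _ ≤ (1 + (b - a) / δ) * (1 + b ^ (2 + α)) * omegaRho α g δ := by gcongr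

theorem abs_sub_le_weight_mul_omegaRho (hα : 0 ≤ 2 + α) (hg : MemBRho α g) (hδ : 0 < δ)
    {x y : ℝ} (hx : 0 ≤ x) (hy : 0 ≤ y) :
    |g y - g x| ≤ (1 + (x + |y - x|) ^ (2 + α)) * (1 + |y - x| / δ) * omegaRho α g δ := by
  rcases le_total x y with hxy | hyx
  · have := abs_sub_le_mul_omegaRho_of_le hα hg hδ hx hxy
    rw [abs_of_nonneg (sub_nonneg.2 hxy), add_sub_cancel]
    linarith
  · have hω : 0 ≤ omegaRho α g δ := omegaRho_nonneg
    rw [abs_sub_comm, abs_sub_comm y, abs_of_nonneg (sub_nonneg.2 hyx)]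
    calc |g x - g y| ≤ (1 + (x - y) / δ) * (1 + x ^ (2 + α)) * omegaRho α g δ :=
          abs_sub_le_mul_omegaRho_of_le hα hg hδ hy hyx
      _ ≤ (1 + (x + (x - y)) ^ (2 + α)) * (1 + (x - y) / δ) * omegaRho α g δ := by
          rw [mul_comm (1 + (x - y) / δ)]
          have : 0 ≤ (x - y) / δ := div_nonneg (sub_nonneg.2 hyx) hδ.le
          have hmono : x ^ (2 + α) ≤ (x + (x - y)) ^ (2 + α) :=
            Real.rpow_le_rpow hx (by linarith) hα
          gcongr

end ModulusOfSmoothness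

/-- Error estimate of a positive, unital linear functional `L` on an unbounded
function `g ∈ B_{ρα}(ℝ₊)` via the weighted modulus of smoothness:
`|L(g) − g(x)| ≤ √(L(μ_{x,α}²)) · (1 + (1/δ)·√(L(φ_x²))) · ω_{ρα}(g; δ)`,
where `μ_{x,α}(y) = 1 + (x + |y − x|)^{2+α}` and `φ_x(y) = |y − x|`. -/
theorem positive_functional_estimate (α : ℝ) (hα : 0 ≤ α) (δ : ℝ) (hδ : 0 < δ)
    (x : ℝ) (hx : 0 ≤ x) (g : ℝ → ℝ) (hg : MemBRho α g)
    (L : (ℝ → ℝ) →ₗ[ℝ] ℝ)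
    (hLpos : ∀ f : ℝ → ℝ, (∀ y : ℝ, 0 ≤ y → 0 ≤ f y) → 0 ≤ L f)
    (hL1 : L (fun _ => 1) = 1) :
    |L g - g x| ≤
      Real.sqrt (L (fun y => (1 + (x + |y - x|) ^ (2 + α)) ^ (2 : ℕ))) *
        (1 + (1 / δ) * Real.sqrt (L (fun y => |y - x| ^ (2 : ℕ)))) * omegaRho α g δ := by
  have hL : ∀ f : ℝ → ℝ, (∀ y, 0 ≤ f y) → 0 ≤ L f := fun f hf => hLpos f fun y _ => hf y
  have hω : 0 ≤ omegaRho α g δ := omegaRho_nonneg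
  have hLg : L (fun y => g y - g x) = L g - g x := by
    rw [show (fun y => g y - g x) = g - g x • fun _ => 1 by ext; simp, map_sub, map_smul, hL1,
      smul_eq_mul, mul_one]
  have hsplit : (fun y => (1 + (x + |y - x|) ^ (2 + α)) * (1 + |y - x| / δ) * omegaRho α g δ) =
      omegaRho α g δ • ((fun y => 1 + (x + |y - x|) ^ (2 + α)) +
        δ⁻¹ • fun y => (1 + (x + |y - x|) ^ (2 + α)) * |y - x|) := by
    ext; simp only [Pi.smul_apply, Pi.add_apply, smul_eq_mul]; ring
  calc |L g - g x| = |L fun y => g y - g x| := by rw [hLg]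
    _ ≤ L fun y => (1 + (x + |y - x|) ^ (2 + α)) * (1 + |y - x| / δ) * omegaRho α g δ :=
        L.abs_map_le_of_abs_le (s := Ici 0) hLpos fun y hy =>
          abs_sub_le_weight_mul_omegaRho (by linarith) hg hδ hx hy
    _ = omegaRho α g δ * (L (fun y => 1 + (x + |y - x|) ^ (2 + α)) +
          δ⁻¹ * L fun y => (1 + (x + |y - x|) ^ (2 + α)) * |y - x|) := by
        rw [hsplit, map_smul, map_add, map_smul, smul_eq_mul, smul_eq_mul]
    _ ≤ omegaRho α g δ * (√(L fun y => (1 + (x + |y - x|) ^ (2 + α)) ^ 2) +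
          δ⁻¹ * (√(L fun y => (1 + (x + |y - x|) ^ (2 + α)) ^ 2) * √(L fun y => |y - x| ^ 2))) := by
        gcongr
        · exact L.map_le_sqrt_map_sq hL hL1 _
        · exact L.map_mul_le_sqrt_mul_sqrt hL _ _
    _ = _ := by ring
end

section
/- Let (q_n)_{n≥1} be a sequence of reals with q_n ∈ (0,1) for all n, such that (q_n) converges statistically to 1 and (q_n^n) converges statistically to 1. Then [n]_{q_n} tends to infinity statistically: for every M > 0, the set {n ∈ ℕ : [n]_{q_n} ≤ M} has natural density zero. -/
/-!
Since `q ≤ 1`, every term `q ^ j` with `j < n` is at least `q ^ n`, so `[n]_q ≥ n qⁿ`.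
Outside the density-zero set where `|q_nⁿ - 1| ≥ 1/2` we have `q_nⁿ > 1/2`, hence
`[n]_{q_n} > n / 2`, which exceeds `M` as soon as `n > 2M`.
-/

/-- The q-integer `[n]_q = ∑_{j=0}^{n-1} q^j`. -/
noncomputable def qInt (q : ℝ) (n : ℕ) : ℝ := ∑ j ∈ Finset.range n, q ^ j

open scoped Classical in
/-- A set `K ⊆ ℕ` has natural density zero if `(1/n)·#{k ≤ n : k ∈ K} → 0`. -/
def DensityZero (K : Set ℕ) : Prop :=
  Filter.Tendsto
    (fun n : ℕ => (((Finset.range (n + 1)).filter (fun k => k ∈ K)).card : ℝ) / n)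
    Filter.atTop (nhds 0)

/-- A real sequence converges statistically to `L` if for every `ε > 0` the set
`{n : |x_n − L| ≥ ε}` has natural density zero. -/
def StatTendsto (x : ℕ → ℝ) (L : ℝ) : Prop :=
  ∀ ε : ℝ, 0 < ε → DensityZero {n : ℕ | ε ≤ |x n - L|}

open Filter Finset

open scoped Classical

theorem DensityZero.of_card_le {S : Set ℕ} {u : ℕ → ℝ} (hu : Tendsto u atTop (nhds 0))
    (hS : ∀ n, ((Finset.range (n + 1)).filter (· ∈ S)).card / (n : ℝ) ≤ u n) :
    DensityZero S :=
  tendsto_of_tendsto_of_tendsto_of_le_of_le tendsto_const_nhds hu (fun _ => by positivity) hS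

theorem DensityZero.mono {S T : Set ℕ} (hT : DensityZero T) (hST : S ⊆ T) : DensityZero S :=
  .of_card_le hT fun n => by
    gcongr

theorem DensityZero.union {S T : Set ℕ} (hS : DensityZero S) (hT : DensityZero T) :
    DensityZero (S ∪ T) := by
  refine .of_card_le (by simpa using hS.add hT) fun n => ?_
  rw [← add_div]
  gcongr
  simp only [Set.mem_union, filter_or]
  exact_mod_cast card_union_le _ _

theorem Set.Finite.densityZero {S : Set ℕ} (hS : S.Finite) : DensityZero S := by
  refine .of_card_le (tendsto_const_div_atTop_nhds_zero_nat (hS.toFinset.card : ℝ)) fun n => ?_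
  gcongr
  exact fun k hk => by simpa using (mem_filter.mp hk).2

theorem natCast_mul_pow_le_qInt {q : ℝ} (hq₀ : 0 ≤ q) (hq₁ : q ≤ 1) (n : ℕ) :
    n * q ^ n ≤ qInt q n := by
  simpa [qInt, nsmul_eq_mul] using card_nsmul_le_sum (range n) (q ^ ·) (q ^ n)
    fun j hj => pow_le_pow_of_le_one hq₀ hq₁ (mem_range.mp hj).le

theorem qInt_statTendsto_atTop_general (q : ℕ → ℝ) (hq : ∀ n : ℕ, 1 ≤ n → 0 < q n ∧ q n < 1)
    (h2 : StatTendsto (fun n => q n ^ n) 1) :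
    ∀ M : ℝ, 0 < M → DensityZero {n : ℕ | qInt (q n) n ≤ M} := by
  intro M _
  refine ((h2 (1 / 2) one_half_pos).union (Set.finite_Iic ⌈2 * M⌉₊).densityZero).mono ?_
  intro n hn
  by_contra! hout
  simp only [Set.mem_union, Set.mem_ofPred_eq, Set.mem_Iic, not_or, not_le] at hn hout
  obtain ⟨hpow, hlarge⟩ := hout
  have hn_pos : (0 : ℝ) < n := by exact_mod_cast (Nat.zero_le _).trans_lt hlarge
  obtain ⟨hq₀, hq₁⟩ := hq n (by exact_mod_cast hn_pos)
  have hqn : 1 / 2 < q n ^ n := by linarith [(abs_lt.mp hpow).1]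
  have hnM : 2 * M < n := (Nat.le_ceil _).trans_lt (by exact_mod_cast hlarge)
  have := natCast_mul_pow_le_qInt hq₀.le hq₁.le n
  nlinarith

/-- If `q_n ∈ (0,1)`, `q_n → 1` statistically and `q_nⁿ → 1` statistically,
then `[n]_{q_n} → ∞` statistically: for every `M > 0` the set
`{n : [n]_{q_n} ≤ M}` has natural density zero. -/
theorem qInt_statTendsto_atTop (q : ℕ → ℝ) (hq : ∀ n : ℕ, 1 ≤ n → 0 < q n ∧ q n < 1)
    (h1 : StatTendsto q 1) (h2 : StatTendsto (fun n => q n ^ n) 1) :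
    ∀ M : ℝ, 0 < M → DensityZero {n : ℕ | qInt (q n) n ≤ M} :=
  qInt_statTendsto_atTop_general q hq h2
end
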